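/- arXiv:2103.10293 — 2 statements merged into one kernel-verified Lean document; each statement's English description precedes it below -/
import Mathlib

section
/- The function t(x) = arctan(exp(x)) is 1/2-smooth on (−∞, 0] in the sense that its first-order Taylor expansion has quadratic error: for all x, y ≤ 0, |t(x) + t′(x)·(y − x) − t(y)| ≤ (1/4)·(y − x)², where t′(x) = 1/(exp(x) + exp(−x)). -/
open Real intervalIntegral

private noncomputable def tfun (x : ℝ) : ℝ := Real.arctan (Real.exp x)
private noncomputable def tder (x : ℝ) : ℝ := 1 / (Real.exp x + Real.exp (-x))

private lemma denom_pos (u : ℝ) : 0 < Real.exp u + Real.exp (-u) := by positivity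

private lemma continuous_tder : Continuous tder := by
  unfold tder
  exact continuous_const.div (Real.continuous_exp.add (Real.continuous_exp.comp continuous_neg))
    (fun u => ne_of_gt (denom_pos u))

private lemma hasDerivAt_tfun (u : ℝ) : HasDerivAt tfun (tder u) u := by
  have h1 : HasDerivAt (fun z : ℝ => Real.arctan (Real.exp z))
      ((1 / (1 + Real.exp u ^ 2)) * Real.exp u) u :=
    (Real.hasDerivAt_arctan (Real.exp u)).comp u (Real.hasDerivAt_exp u)
  have heq : (1 / (1 + Real.exp u ^ 2)) * Real.exp u = tder u := by
    unfold tder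
    rw [Real.exp_neg]
    have h := Real.exp_pos u
    have h2 : (0:ℝ) < 1 + Real.exp u ^ 2 := by positivity
    field_simp
    ring
  rw [heq] at h1
  exact h1

private lemma hasDerivAt_tder (u : ℝ) :
    HasDerivAt tder ((Real.exp (-u) - Real.exp u) / (Real.exp u + Real.exp (-u)) ^ 2) u := by
  have h2 : HasDerivAt (fun z : ℝ => Real.exp (-z)) (-Real.exp (-u)) u := by
    simpa using (show HasDerivAt (fun z : ℝ => Real.exp (-z)) _ u from (Real.hasDerivAt_exp (-u)).comp u ((hasDerivAt_id u).neg))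
  have h1 : HasDerivAt (fun z : ℝ => Real.exp z + Real.exp (-z))
      (Real.exp u - Real.exp (-u)) u := by
    simpa [sub_eq_add_neg] using (show HasDerivAt (fun z : ℝ => Real.exp z + Real.exp (-z)) _ u from (Real.hasDerivAt_exp u).add h2)
  have h := h1.inv (ne_of_gt (denom_pos u))
  have heq : -(Real.exp u - Real.exp (-u)) / (Real.exp u + Real.exp (-u)) ^ 2
      = (Real.exp (-u) - Real.exp u) / (Real.exp u + Real.exp (-u)) ^ 2 := by ring
  rw [← heq]
  unfold tder
  simp only [one_div]
  exact h

private lemma tder_lip (a b : ℝ) : |tder a - tder b| ≤ (1 / 2) * |a - b| := by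
  have := Convex.norm_image_sub_le_of_norm_hasDerivWithin_le
    (f := tder) (f' := fun u => (Real.exp (-u) - Real.exp u) / (Real.exp u + Real.exp (-u)) ^ 2)
    (s := Set.univ) (C := 1 / 2)
    (fun u _ => (hasDerivAt_tder u).hasDerivWithinAt)
    (fun u _ => by
      have hp := denom_pos u
      have h1 := Real.exp_pos u
      have h2 := Real.exp_pos (-u)
      have hprod : Real.exp u * Real.exp (-u) = 1 := by
        rw [← Real.exp_add]; simp
      rw [Real.norm_eq_abs, abs_div, abs_of_pos (pow_pos hp 2),
        div_le_iff₀ (pow_pos hp 2)]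
      rcases abs_cases (Real.exp (-u) - Real.exp u) with ⟨h, _⟩ | ⟨h, _⟩ <;> rw [h] <;>
        nlinarith [sq_nonneg (Real.exp u - Real.exp (-u) - 1),
          sq_nonneg (Real.exp u - Real.exp (-u) + 1)])
    convex_univ (Set.mem_univ b) (Set.mem_univ a)
  simpa [Real.norm_eq_abs] using this

private lemma taylor_bound (a b : ℝ) :
    |tfun a + tder a * (b - a) - tfun b| ≤ (1 / 4) * (b - a) ^ 2 := by
  have hInt : ∀ c d : ℝ, IntervalIntegrable tder MeasureTheory.volume c d :=
    fun c d => continuous_tder.intervalIntegrable c d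
  have hI : ∫ u in a..b, tder u = tfun b - tfun a :=
    intervalIntegral.integral_eq_sub_of_hasDerivAt (fun u _ => hasDerivAt_tfun u) (hInt a b)
  have hE : tfun a + tder a * (b - a) - tfun b = ∫ u in a..b, (tder a - tder u) := by
    rw [intervalIntegral.integral_sub (intervalIntegrable_const) (hInt a b), hI,
      intervalIntegral.integral_const]
    simp [smul_eq_mul]
    ring
  rw [hE]
  have hlin : ∀ c d : ℝ, ∫ u in c..d, (u - a) = (d ^ 2 - c ^ 2) / 2 - a * (d - c) := by
    intro c d
    rw [intervalIntegral.integral_sub (intervalIntegral.intervalIntegrable_id)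
      intervalIntegrable_const, integral_id, intervalIntegral.integral_const]
    simp [smul_eq_mul]
    ring
  rcases le_total a b with hab | hba
  · calc |∫ u in a..b, (tder a - tder u)|
        = ‖∫ u in a..b, (tder a - tder u)‖ := (Real.norm_eq_abs _).symm
      _ ≤ ∫ u in a..b, ‖tder a - tder u‖ :=
          intervalIntegral.norm_integral_le_integral_norm hab
      _ ≤ ∫ u in a..b, (1 / 2) * (u - a) := by
          apply intervalIntegral.integral_mono_on hab
          · exact ((continuous_const.sub continuous_tder).norm).intervalIntegrable a b
          · exact (continuous_const.mul (continuous_id.sub continuous_const)).intervalIntegrable a b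
          · intro u hu
            have h := tder_lip a u
            rw [Real.norm_eq_abs]
            calc |tder a - tder u| ≤ (1 / 2) * |a - u| := h
              _ = (1 / 2) * (u - a) := by rw [abs_sub_comm, abs_of_nonneg (by linarith [hu.1])]
      _ = (1 / 4) * (b - a) ^ 2 := by
          rw [intervalIntegral.integral_const_mul, hlin]
          ring
  · have hsymm : ∫ u in a..b, (tder a - tder u) = -(∫ u in b..a, (tder a - tder u)) :=
      (intervalIntegral.integral_symm b a)
    rw [hsymm, abs_neg]
    calc |∫ u in b..a, (tder a - tder u)|
        = ‖∫ u in b..a, (tder a - tder u)‖ := (Real.norm_eq_abs _).symm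
      _ ≤ ∫ u in b..a, ‖tder a - tder u‖ :=
          intervalIntegral.norm_integral_le_integral_norm hba
      _ ≤ ∫ u in b..a, (1 / 2) * (a - u) := by
          apply intervalIntegral.integral_mono_on hba
          · exact ((continuous_const.sub continuous_tder).norm).intervalIntegrable b a
          · exact (continuous_const.mul (continuous_const.sub continuous_id)).intervalIntegrable b a
          · intro u hu
            have h := tder_lip a u
            rw [Real.norm_eq_abs]
            calc |tder a - tder u| ≤ (1 / 2) * |a - u| := h
              _ = (1 / 2) * (a - u) := by rw [abs_of_nonneg (by linarith [hu.2])]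
      _ = (1 / 4) * (b - a) ^ 2 := by
          have : ∀ u : ℝ, (1:ℝ) / 2 * (a - u) = (-(1/2)) * (u - a) := by intro u; ring
          simp_rw [this]
          rw [intervalIntegral.integral_const_mul, hlin]
          ring
  
theorem arctan_exp_half_smooth (x y : ℝ) (hx : x ≤ 0) (hy : y ≤ 0) :
    |Real.arctan (Real.exp x) +
        (1 / (Real.exp x + Real.exp (-x))) * (y - x) -
        Real.arctan (Real.exp y)| ≤ (1 / 4) * (y - x) ^ 2 := by
  simpa [tfun, tder] using taylor_bound x y
end

section
/- Let t(x) = arctan(exp(x)) and let x₁ < x₂ ≤ 0. Denote by l_{x_i}(y) = t(x_i) + t′(x_i)·(y − x_i) the tangent line of t at x_i, where t′(x) = 1/(exp(x) + exp(−x)). Then for every y ∈ [x₁, x₂], 0 ≤ t(y) − max(l_{x₁}(y), l_{x₂}(y)) ≤ (1/4)·((x₂ − x₁)/2)²; that is, the upper envelope of the two endpoint tangent lines underestimates t on [x₁, x₂] with error at most (x₂ − x₁)²/16. -/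
open Real

private lemma aet_hasDerivAt_t (x : ℝ) :
    HasDerivAt (fun x => Real.arctan (Real.exp x)) (1 / (Real.exp x + Real.exp (-x))) x := by
  have h := (Real.hasDerivAt_arctan (Real.exp x)).comp x (Real.hasDerivAt_exp x)
  refine h.congr_deriv ?_
  have h1 := Real.exp_pos x
  rw [Real.exp_neg]
  field_simp
  ring

private lemma aet_hasDerivAt_t' (x : ℝ) :
    HasDerivAt (fun x => 1 / (Real.exp x + Real.exp (-x)))
      (-(Real.exp x - Real.exp (-x)) / (Real.exp x + Real.exp (-x)) ^ 2) x := by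
  have hne : Real.exp x + Real.exp (-x) ≠ 0 := by positivity
  have h : HasDerivAt (fun x => Real.exp x + Real.exp (-x))
      (Real.exp x - Real.exp (-x)) x := by
    have h2 : HasDerivAt (fun x : ℝ => Real.exp (-x)) (-Real.exp (-x)) x := by
      simpa [Function.comp_def] using (Real.hasDerivAt_exp (-x)).comp x ((hasDerivAt_id x).neg)
    simpa [sub_eq_add_neg, Pi.add_def] using (Real.hasDerivAt_exp x).add h2
  simpa [one_div, Pi.inv_def] using h.inv hne

private lemma aet_coshlike_ge_two (x : ℝ) : 2 ≤ Real.exp x + Real.exp (-x) := by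
  have h1 := Real.exp_pos x
  have h2 : Real.exp x * Real.exp (-x) = 1 := by
    rw [← Real.exp_add]; simp
  nlinarith [sq_nonneg (Real.exp x - 1), Real.exp_pos (-x)]

/-- t' is 1/2-Lipschitz. -/
private lemma aet_lip (a b : ℝ) :
    |(1 / (Real.exp a + Real.exp (-a))) - (1 / (Real.exp b + Real.exp (-b)))|
      ≤ (1 / 2) * |a - b| := by
  have := Convex.norm_image_sub_le_of_norm_hasDerivWithin_le
    (f := fun x => 1 / (Real.exp x + Real.exp (-x)))
    (f' := fun x => -(Real.exp x - Real.exp (-x)) / (Real.exp x + Real.exp (-x)) ^ 2)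
    (s := Set.univ) (C := 1 / 2)
    (fun x _ => (aet_hasDerivAt_t' x).hasDerivWithinAt)
    (fun x _ => by
      have h2 := aet_coshlike_ge_two x
      have h1 := Real.exp_pos x
      have h1' := Real.exp_pos (-x)
      rw [Real.norm_eq_abs, abs_div, abs_neg]
      rw [div_le_iff₀ (by positivity)]
      have habs : |Real.exp x - Real.exp (-x)| ≤ Real.exp x + Real.exp (-x) := by
        rw [abs_le]; constructor <;> nlinarith
      have hsq : |(Real.exp x + Real.exp (-x)) ^ 2| = (Real.exp x + Real.exp (-x)) ^ 2 := by
        exact abs_of_nonneg (by positivity)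
      rw [hsq]
      nlinarith)
    convex_univ (Set.mem_univ b) (Set.mem_univ a)
  simpa [Real.norm_eq_abs] using this

/-- t' is monotone on (-∞, 0]. -/
private lemma aet_mono : MonotoneOn (fun x => 1 / (Real.exp x + Real.exp (-x))) (Set.Iic (0:ℝ)) := by
  apply monotoneOn_of_deriv_nonneg (convex_Iic 0)
  · exact fun x _ => ((aet_hasDerivAt_t' x).continuousAt).continuousWithinAt
  · intro x _
    exact (aet_hasDerivAt_t' x).differentiableAt.differentiableWithinAt
  · intro x hx
    rw [interior_Iic] at hx
    rw [(aet_hasDerivAt_t' x).deriv]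
    have hxe : Real.exp x ≤ Real.exp (-x) := Real.exp_le_exp.2 (by linarith [hx.out])
    apply div_nonneg (by linarith) (by positivity)

/-- Tangent line lies below t, for points in (-∞, 0]. -/
private lemma aet_tangent_le (a b : ℝ) (ha : a ≤ 0) (hb : b ≤ 0) :
    Real.arctan (Real.exp a) + (1 / (Real.exp a + Real.exp (-a))) * (b - a)
      ≤ Real.arctan (Real.exp b) := by
  set T' : ℝ → ℝ := fun x => 1 / (Real.exp x + Real.exp (-x)) with hT'
  set g : ℝ → ℝ := fun s => Real.arctan (Real.exp s) - (Real.arctan (Real.exp a) + T' a * (s - a))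
    with hg
  have hg' : ∀ s, HasDerivAt g (T' s - T' a) s := by
    intro s
    have := (aet_hasDerivAt_t s).sub
      (((hasDerivAt_id s).sub_const a).const_mul (T' a) |>.const_add (Real.arctan (Real.exp a)))
    simpa [hg, hT', mul_comm, Pi.sub_def] using this
  have hga : g a = 0 := by simp [hg]
  rcases le_total a b with hab | hab
  · have hmono : MonotoneOn g (Set.Icc a b) := by
      apply monotoneOn_of_deriv_nonneg (convex_Icc a b)
      · exact fun s _ => (hg' s).continuousAt.continuousWithinAt
      · exact fun s _ => (hg' s).differentiableAt.differentiableWithinAt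
      · intro s hs
        rw [interior_Icc] at hs
        rw [(hg' s).deriv, sub_nonneg]
        exact aet_mono (Set.mem_Iic.2 ha) (Set.mem_Iic.2 (by linarith [hs.2])) (le_of_lt hs.1)
    have := hmono (Set.left_mem_Icc.2 hab) (Set.right_mem_Icc.2 hab) hab
    rw [hga] at this
    simpa [hg, hT', sub_nonneg] using this
  · have hanti : AntitoneOn g (Set.Icc b a) := by
      apply antitoneOn_of_deriv_nonpos (convex_Icc b a)
      · exact fun s _ => (hg' s).continuousAt.continuousWithinAt
      · exact fun s _ => (hg' s).differentiableAt.differentiableWithinAt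
      · intro s hs
        rw [interior_Icc] at hs
        rw [(hg' s).deriv, sub_nonpos]
        exact aet_mono (Set.mem_Iic.2 (by linarith [hs.2])) (Set.mem_Iic.2 ha) (le_of_lt hs.2)
    have := hanti (Set.left_mem_Icc.2 hab) (Set.right_mem_Icc.2 hab) hab
    rw [hga] at this
    simpa [hg, hT', sub_nonneg] using this

/-- Second-order tangent bound (global). -/
private lemma aet_tangent_bound (a b : ℝ) :
    Real.arctan (Real.exp b) -
      (Real.arctan (Real.exp a) + (1 / (Real.exp a + Real.exp (-a))) * (b - a))
      ≤ (1 / 4) * (b - a) ^ 2 := by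
  set T' : ℝ → ℝ := fun x => 1 / (Real.exp x + Real.exp (-x)) with hT'
  set h : ℝ → ℝ := fun s =>
    Real.arctan (Real.exp a) + T' a * (s - a) + (1 / 4) * (s - a) ^ 2
      - Real.arctan (Real.exp s) with hh
  have hh' : ∀ s, HasDerivAt h (T' a + (1 / 2) * (s - a) - T' s) s := by
    intro s
    have h1 : HasDerivAt (fun s : ℝ => (1 / 4 : ℝ) * (s - a) ^ 2) ((1 / 2) * (s - a)) s := by
      have := (((hasDerivAt_id s).sub_const a).pow 2).const_mul (1 / 4 : ℝ)
      refine this.congr_deriv ?_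
      simp [id_eq]
      ring
    have := ((((hasDerivAt_id s).sub_const a).const_mul (T' a) |>.const_add
      (Real.arctan (Real.exp a))).add h1).sub (aet_hasDerivAt_t s)
    simpa [hh, hT', mul_comm, Pi.sub_def, Pi.add_def] using this
  have hha : h a = 0 := by simp [hh]
  have key : 0 ≤ h b := by
    rcases le_total a b with hab | hab
    · have hmono : MonotoneOn h (Set.Icc a b) := by
        apply monotoneOn_of_deriv_nonneg (convex_Icc a b)
        · exact fun s _ => (hh' s).continuousAt.continuousWithinAt
        · exact fun s _ => (hh' s).differentiableAt.differentiableWithinAt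
        · intro s hs
          rw [interior_Icc] at hs
          rw [(hh' s).deriv]
          have := aet_lip s a
          rw [abs_le] at this
          have habs : |s - a| = s - a := abs_of_nonneg (by linarith [hs.1])
          rw [habs] at this
          simp only [hT']
          linarith [this.2]
      have := hmono (Set.left_mem_Icc.2 hab) (Set.right_mem_Icc.2 hab) hab
      linarith [hha ▸ this]
    · have hanti : AntitoneOn h (Set.Icc b a) := by
        apply antitoneOn_of_deriv_nonpos (convex_Icc b a)
        · exact fun s _ => (hh' s).continuousAt.continuousWithinAt
        · exact fun s _ => (hh' s).differentiableAt.differentiableWithinAt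
        · intro s hs
          rw [interior_Icc] at hs
          rw [(hh' s).deriv]
          have := aet_lip a s
          rw [abs_le] at this
          have habs : |a - s| = a - s := abs_of_nonneg (by linarith [hs.2])
          rw [habs] at this
          simp only [hT']
          linarith [this.2]
      have := hanti (Set.left_mem_Icc.2 hab) (Set.right_mem_Icc.2 hab) hab
      linarith [hha ▸ this]
  simp only [hh] at key
  linarith

theorem arctan_exp_tangent_envelope (x₁ x₂ : ℝ) (h12 : x₁ < x₂) (h2 : x₂ ≤ 0)
    (t : ℝ → ℝ) (ht : t = fun x => Real.arctan (Real.exp x))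
    (t' : ℝ → ℝ) (ht' : t' = fun x => 1 / (Real.exp x + Real.exp (-x)))
    (l : ℝ → ℝ → ℝ) (hl : l = fun x y => t x + t' x * (y - x)) :
    ∀ y : ℝ, x₁ ≤ y → y ≤ x₂ →
      0 ≤ t y - max (l x₁ y) (l x₂ y) ∧
      t y - max (l x₁ y) (l x₂ y) ≤ (1 / 4) * ((x₂ - x₁) / 2) ^ 2 := by
  subst ht ht' hl
  intro y hy1 hy2
  have hy0 : y ≤ 0 := le_trans hy2 h2
  have h10 : x₁ ≤ 0 := le_trans (le_of_lt h12) h2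
  have hle1 := aet_tangent_le x₁ y h10 hy0
  have hle2 := aet_tangent_le x₂ y h2 hy0
  constructor
  · simp only [sub_nonneg, le_max_iff] at *
    rcases max_cases (Real.arctan (Real.exp x₁) + 1 / (Real.exp x₁ + Real.exp (-x₁)) * (y - x₁))
      (Real.arctan (Real.exp x₂) + 1 / (Real.exp x₂ + Real.exp (-x₂)) * (y - x₂)) with h | h <;>
      simp only [h.1] <;> [exact hle1; exact hle2]
  · rcases le_total y ((x₁ + x₂) / 2) with hmid | hmid
    · have hb := aet_tangent_bound x₁ y
      have hmax : Real.arctan (Real.exp x₁) + 1 / (Real.exp x₁ + Real.exp (-x₁)) * (y - x₁)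
          ≤ max (Real.arctan (Real.exp x₁) + 1 / (Real.exp x₁ + Real.exp (-x₁)) * (y - x₁))
            (Real.arctan (Real.exp x₂) + 1 / (Real.exp x₂ + Real.exp (-x₂)) * (y - x₂)) :=
        le_max_left _ _
      have hsq : (y - x₁) ^ 2 ≤ ((x₂ - x₁) / 2) ^ 2 := by nlinarith
      simp only at *
      linarith
    · have hb := aet_tangent_bound x₂ y
      have hmax : Real.arctan (Real.exp x₂) + 1 / (Real.exp x₂ + Real.exp (-x₂)) * (y - x₂)
          ≤ max (Real.arctan (Real.exp x₁) + 1 / (Real.exp x₁ + Real.exp (-x₁)) * (y - x₁))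
            (Real.arctan (Real.exp x₂) + 1 / (Real.exp x₂ + Real.exp (-x₂)) * (y - x₂)) :=
        le_max_right _ _
      have hsq : (y - x₂) ^ 2 ≤ ((x₂ - x₁) / 2) ^ 2 := by nlinarith
      simp only at *
      linarith
end
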